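/- For a triangulation T of a convex m-gon, χ_T never takes the value 0 on tuples of four distinct vertices; hence every 4-subset of [m] is a basis of M_T and M_T is a uniform rank-4 oriented matroid. -/
import Mathlib


namespace CyclicTri

variable {m : ℕ}

/-- Position of `v` relative to base point `a` in the cyclic order on `ZMod m`. -/
def pos (a v : ZMod m) : ℕ := (v - a).val

/-- `a ≺ b ≺ c` in the cyclic order. -/
def Cyc3 (a b c : ZMod m) : Prop := 0 < pos a b ∧ pos a b < pos a c

/-- `a ≺ b ≺ c ≺ d` in the cyclic order. -/
def Cyc4 (a b c d : ZMod m) : Prop :=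
  0 < pos a b ∧ pos a b < pos a c ∧ pos a c < pos a d

/-- The arcs `xy` and `x'y'` cross: their endpoints interleave cyclically. -/
def Cross (x y x' y' : ZMod m) : Prop := Cyc4 x x' y y' ∨ Cyc4 x' x y' y

/-- `xy` is a diagonal of the polygon: the endpoints are distinct and non-adjacent. -/
def Diag (x y : ZMod m) : Prop := x ≠ y ∧ y ≠ x + 1 ∧ x ≠ y + 1

/-- `A` is (the symmetrised set of arcs of) a triangulation of the convex `m`-gon:
a maximal set of pairwise non-crossing diagonals. -/
def IsTriangulation (A : Set (ZMod m × ZMod m)) : Prop :=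
  (∀ x y, (x, y) ∈ A → (y, x) ∈ A) ∧
  (∀ x y, (x, y) ∈ A → Diag x y) ∧
  (∀ x y x' y', (x, y) ∈ A → (x', y') ∈ A → ¬ Cross x y x' y') ∧
  (∀ x y, Diag x y → (∀ x' y', (x', y') ∈ A → ¬ Cross x y x' y') → (x, y) ∈ A)

/-- There is an arc `xy` of `A` with `a ≺ b ≼ x ≺ c ≺ d ≼ y` (the `+1` case of `χ_T`). -/
def PosCase (A : Set (ZMod m × ZMod m)) (a b c d : ZMod m) : Prop :=
  ∃ x y, (x, y) ∈ A ∧ 0 < pos a b ∧ pos a b ≤ pos a x ∧ pos a x < pos a c ∧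
    pos a c < pos a d ∧ pos a d ≤ pos a y

/-- There is an arc `xy` of `A` with `a ≼ x ≺ b ≺ c ≼ y ≺ d` (the `-1` case of `χ_T`). -/
def NegCase (A : Set (ZMod m × ZMod m)) (a b c d : ZMod m) : Prop :=
  ∃ x y, (x, y) ∈ A ∧ pos a x < pos a b ∧ pos a b < pos a c ∧ pos a c ≤ pos a y ∧
    pos a y < pos a d

open Classical in
/-- The chirotope `χ_T` on cyclically ordered tuples `a ≺ b ≺ c ≺ d`. -/
noncomputable def chiCyc (A : Set (ZMod m × ZMod m)) (a b c d : ZMod m) : ℤ :=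
  if PosCase A a b c d then 1 else if NegCase A a b c d then -1 else 0

end CyclicTri

namespace CyclicTri

lemma val_sub'' {m : ℕ} (hm : 0 < m) (u v : ZMod m) :
    (v - u).val = if u.val ≤ v.val then v.val - u.val else v.val + m - u.val := by
  haveI : NeZero m := ⟨hm.ne'⟩
  split_ifs with h
  · exact ZMod.val_sub h
  · push_neg at h
    have hne : u - v ≠ 0 := by
      intro e
      have : u = v := by
        have := sub_eq_zero.mp e
        exact this
      rw [this] at h; omega
    haveI : NeZero (u - v) := ⟨hne⟩
    have h1 : (u - v).val = u.val - v.val := ZMod.val_sub h.le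
    have h2 : (-(u - v)).val = m - (u - v).val := ZMod.val_neg_of_ne_zero _
    have h3 : v - u = -(u - v) := by ring
    have hu : u.val < m := ZMod.val_lt u
    rw [h3, h2, h1]
    omega

lemma pos_lt' {m : ℕ} (hm : 0 < m) (x v : ZMod m) : pos x v < m := by
  haveI : NeZero m := ⟨hm.ne'⟩
  exact ZMod.val_lt _

lemma pos_shift {m : ℕ} (hm : 0 < m) (x u v : ZMod m) :
    pos u v = if pos x u ≤ pos x v then pos x v - pos x u else pos x v + m - pos x u := by
  have h : v - u = (v - x) - (u - x) := by ring
  show (v - u).val = _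
  rw [h]
  exact val_sub'' hm _ _

lemma pos_succ {m : ℕ} (hm : 1 < m) (x b : ZMod m) : pos x (b + 1) = (pos x b + 1) % m := by
  haveI : NeZero m := ⟨by omega⟩
  haveI : Fact (1 < m) := ⟨hm⟩
  show (b + 1 - x).val = _
  rw [show b + 1 - x = (b - x) + 1 by ring, ZMod.val_add, ZMod.val_one]
  rfl

lemma cross_of_pos {m : ℕ} (hm : 0 < m) (a : ZMod m) {p q r s : ZMod m}
    (h1 : pos a p < pos a q) (h2 : pos a q < pos a r) (h3 : pos a r < pos a s) :
    Cross p r q s := by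
  have hs := pos_lt' hm a s
  left
  show 0 < pos p q ∧ pos p q < pos p r ∧ pos p r < pos p s
  rw [pos_shift hm a p q, pos_shift hm a p r, pos_shift hm a p s]
  split_ifs <;> omega

lemma cross_extract {m : ℕ} (hm : 0 < m) (a : ZMod m) {b d x y : ZMod m}
    (h0 : 0 < pos a b) (hbd : pos a b < pos a d) (hcr : Cross b d x y) :
    (pos a b < pos a x ∧ pos a x < pos a d ∧ (pos a y < pos a b ∨ pos a d < pos a y)) ∨
    (pos a b < pos a y ∧ pos a y < pos a d ∧ (pos a x < pos a b ∨ pos a d < pos a x)) := by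
  have hb := pos_lt' hm a b
  have hd := pos_lt' hm a d
  have hx := pos_lt' hm a x
  have hy := pos_lt' hm a y
  rcases hcr with hc | hc
  · left
    have hc' : 0 < pos b x ∧ pos b x < pos b d ∧ pos b d < pos b y := hc
    rw [pos_shift hm a b x, pos_shift hm a b d, pos_shift hm a b y] at hc'
    split_ifs at hc' <;> omega
  · right
    have hc' : 0 < pos x b ∧ pos x b < pos x y ∧ pos x y < pos x d := hc
    rw [pos_shift hm a x b, pos_shift hm a x y, pos_shift hm a x d] at hc'
    split_ifs at hc' <;> omega

lemma main_ind {m : ℕ} (hm : 4 ≤ m) (A : Set (ZMod m × ZMod m)) (hT : IsTriangulation A)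
    (a : ZMod m) :
    ∀ N b c d, Cyc4 a b c d → pos a c - pos a b + (m - pos a d) ≤ N →
      PosCase A a b c d ∨ NegCase A a b c d := by
  have hm0 : 0 < m := by omega
  intro N
  induction N with
  | zero =>
    intro b c d hcyc hN
    obtain ⟨h1, h2, h3⟩ := hcyc
    omega
  | succ N ih =>
    intro b c d hcyc hN
    obtain ⟨h1, h2, h3⟩ := hcyc
    have hdm : pos a d < m := pos_lt' hm0 a d
    have hbdd : Diag b d := by
      refine ⟨?_, ?_, ?_⟩
      · intro e; rw [e] at h2; omega
      · intro e
        have he : pos a d = (pos a b + 1) % m := by rw [e, pos_succ (by omega)]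
        rw [Nat.mod_eq_of_lt (by omega)] at he
        omega
      · intro e
        have he : pos a b = (pos a d + 1) % m := by rw [e, pos_succ (by omega)]
        rcases Nat.lt_or_ge (pos a d + 1) m with hlt | hge
        · rw [Nat.mod_eq_of_lt hlt] at he; omega
        · have hem : pos a d + 1 = m := by omega
          rw [hem, Nat.mod_self] at he
          omega
    by_cases hA : (b, d) ∈ A
    · exact Or.inl ⟨b, d, hA, h1, le_refl _, h2, h3, le_refl _⟩
    have hex : ∃ x y, (x, y) ∈ A ∧ Cross b d x y := by
      by_contra hno
      push_neg at hno
      exact hA (hT.2.2.2 b d hbdd fun x y hxy => hno x y hxy)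
    obtain ⟨x, y, hxy, hcr⟩ := hex
    have hext := cross_extract hm0 a h1 (lt_trans h2 h3) hcr
    obtain ⟨u, v, huv, hu1, hu2, hv⟩ :
        ∃ u v, (u, v) ∈ A ∧ pos a b < pos a u ∧ pos a u < pos a d ∧
          (pos a v < pos a b ∨ pos a d < pos a v) := by
      rcases hext with ⟨p1, p2, p3⟩ | ⟨p1, p2, p3⟩
      · exact ⟨x, y, hxy, p1, p2, p3⟩
      · exact ⟨y, x, hT.1 x y hxy, p1, p2, p3⟩
    have hum : pos a u < m := pos_lt' hm0 a u
    have hvm : pos a v < m := pos_lt' hm0 a v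
    rcases Nat.lt_or_ge (pos a u) (pos a c) with huc | huc
    · rcases hv with hv | hv
      · -- arc (v,u) with pos v < pos b < pos u < pos c : recurse with b := u
        have hrec := ih u c d ⟨by omega, huc, h3⟩ (by omega)
        rcases hrec with ⟨x', y', hxy', q1, q2, q3, q4, q5⟩ | ⟨x', y', hxy', q1, q2, q3, q4⟩
        · exact Or.inl ⟨x', y', hxy', h1, by omega, q3, q4, q5⟩
        · rcases Nat.lt_or_ge (pos a x') (pos a b) with hx' | hx'
          · exact Or.inr ⟨x', y', hxy', hx', h2, q3, q4⟩
          · exfalso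
            have hcross : Cross v u x' y' := cross_of_pos hm0 a (by omega) (by omega) (by omega)
            exact hT.2.2.1 v u x' y' (hT.1 u v huv) hxy' hcross
      · exact Or.inl ⟨u, v, huv, h1, hu1.le, huc, h3, hv.le⟩
    · rcases hv with hv | hv
      · exact Or.inr ⟨v, u, hT.1 u v huv, hv, h2, huc, hu2⟩
      · -- arc (u,v) with pos c ≤ pos u < pos d < pos v : recurse with d := v
        have hrec := ih b c v ⟨h1, h2, by omega⟩ (by omega)
        rcases hrec with ⟨x', y', hxy', q1, q2, q3, q4, q5⟩ | ⟨x', y', hxy', q1, q2, q3, q4⟩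
        · exact Or.inl ⟨x', y', hxy', q1, q2, q3, h3, by omega⟩
        · rcases Nat.lt_or_ge (pos a y') (pos a d) with hy' | hy'
          · exact Or.inr ⟨x', y', hxy', q1, q2, q3, hy'⟩
          · exfalso
            have hcross : Cross x' y' u v := cross_of_pos hm0 a (by omega) (by omega) (by omega)
            exact hT.2.2.1 x' y' u v hxy' huv hcross

end CyclicTri

open CyclicTri in
/-- `χ_T` never vanishes on (cyclically ordered tuples of) four distinct vertices;
hence every 4-subset of `[m]` is a basis and `M_T` is a uniform rank-4 oriented
matroid. -/
theorem stmt_18 (m : ℕ) (hm : 4 ≤ m) (A : Set (ZMod m × ZMod m))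
    (hT : IsTriangulation A) (a b c d : ZMod m) (h : Cyc4 a b c d) :
    chiCyc A a b c d = 1 ∨ chiCyc A a b c d = -1 := by
  rcases main_ind hm A hT a (pos a c - pos a b + (m - pos a d)) b c d h (le_refl _) with hp | hn
  · left; simp [chiCyc, hp]
  · by_cases hp : PosCase A a b c d
    · left; simp [chiCyc, hp]
    · right; simp [chiCyc, hp, hn]
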